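/- arXiv:2209.08079 — 2 statements merged into one kernel-verified Lean document; each statement's English description precedes it below -/
import Mathlib

section
/- Let G be a connected digraph, u a vertex with out-neighbors x_1,...,x_d, and v a vertex distinct from u with no edge from u to v. Then P(L(u,v)) = (1/d) * sum over i of (P(L(x_i,v)) + P(L(x_i; v, u))), where L(x_i; v, u) is the event that a random cover tour from x_i ends at u with v the next-to-last vertex to be first-visited. -/
open scoped ENNReal BigOperators

/-- A nonempty list of vertices is a walk if consecutive vertices are joined by edges. -/
def IsWalk {V : Type*} (E : V → V → Prop) : List V → Prop
  | [] => False
  | [_] => True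
  | a :: b :: t => E a b ∧ IsWalk E (b :: t)

/-- A digraph is connected if there is a directed walk between any two vertices. -/
def Conn {V : Type*} (E : V → V → Prop) : Prop :=
  ∀ a b : V, ∃ l : List V, IsWalk E l ∧ l.head? = some a ∧ l.getLast? = some b

/-- The out-neighbourhood of a vertex. -/
def outNbrs {V : Type*} [Fintype V] (E : V → V → Prop) [DecidableRel E] (u : V) : Finset V :=
  Finset.univ.filter (fun x => E u x)

/-- The probability that a simple random walk (moving to a uniformly random out-neighbour
at each step) follows a given finite walk. -/
noncomputable def walkWt {V : Type*} [Fintype V] (E : V → V → Prop) [DecidableRel E] :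
    List V → ℝ≥0∞
  | [] => 1
  | [_] => 1
  | a :: b :: t => ((outNbrs E a).card : ℝ≥0∞)⁻¹ * walkWt E (b :: t)

/-- `l` is a cover tour from `u` ending at `v`: a walk starting at `u`, visiting every
vertex, ending at `v`, with `v` first visited at the final step. -/
def IsCoverTour {V : Type*} (E : V → V → Prop) (u v : V) (l : List V) : Prop :=
  IsWalk E l ∧ l.head? = some u ∧ l.getLast? = some v ∧ (∀ x : V, x ∈ l) ∧ v ∉ l.dropLast

/-- `P(L(u,v))`: the probability that a random cover tour from `u` ends at `v`,
i.e. that `v` is the last vertex to be first-visited by the random walk from `u`. -/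
noncomputable def coverProb {V : Type*} [Fintype V] (E : V → V → Prop) [DecidableRel E]
    (u v : V) : ℝ≥0∞ :=
  ∑' l : {l : List V // IsCoverTour E u v l}, walkWt E (l : List V)

/-- `l` is a cover tour from `w` ending at `u`, in which `v` is the next-to-last vertex
to be first-visited: some prefix of `l` ends at `v`, first-visits `v` at its last step,
and has already visited every vertex other than `u`. -/
def IsCoverTour2 {V : Type*} (E : V → V → Prop) (w v u : V) (l : List V) : Prop :=
  IsWalk E l ∧ l.head? = some w ∧ l.getLast? = some u ∧ (∀ x : V, x ∈ l) ∧ u ∉ l.dropLast ∧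
    ∃ p : List V, p <+: l ∧ p.getLast? = some v ∧ v ∉ p.dropLast ∧ ∀ x : V, x ≠ u → x ∈ p

/-- `P(L(w; v, u))`: the probability that a random cover tour from `w` ends at `u`
with `v` the next-to-last vertex to be first-visited. -/
noncomputable def coverProb2 {V : Type*} [Fintype V] (E : V → V → Prop) [DecidableRel E]
    (w v u : V) : ℝ≥0∞ :=
  ∑' l : {l : List V // IsCoverTour2 E w v u l}, walkWt E (l : List V)

/-!
Condition on the first step `u → x`. A cover tour from `u` ending at `v` that returns to `u`
has as its tail a cover tour from `x` ending at `v`. One that never returns to `u` has as its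
tail a walk from `x` that avoids `u`, visits every other vertex and first reaches `v` at its
end. Appending to such a walk a walk from `v` stopped on first hitting `u` produces every
`L(x; v, u)` tour exactly once, with multiplied weights, so `P(L(x; v, u))` is the weight of
those tails times the probability that the walk from `v` ever hits `u`. That probability is `1`:
on a finite strongly connected digraph the hitting probability of `u` is at most `1` and
harmonic off `u`, so its minimum propagates along edges until it reaches `u`, where it is `1`.
-/

section

variable {V : Type*}

section Walks

variable {E : V → V → Prop}

theorem isWalk_iff_isChain : ∀ {l : List V}, IsWalk E l ↔ l ≠ [] ∧ l.IsChain E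
  | [] => by simp [IsWalk]
  | [_] => by simp [IsWalk]
  | _ :: b :: t => by simp [IsWalk, isWalk_iff_isChain (l := b :: t)]

theorem isWalk_cons {a x : V} {t : List V} (ht : t.head? = some x) :
    IsWalk E (a :: t) ↔ E a x ∧ IsWalk E t := by
  obtain ⟨s, rfl⟩ := List.head?_eq_some_iff.1 ht
  rfl

theorem IsWalk.append_tail {p q : List V} (hp : IsWalk E p) (hq : IsWalk E q)
    (h : p.getLast? = q.head?) : IsWalk E (p ++ q.tail) := by
  obtain ⟨hpne, hpc⟩ := isWalk_iff_isChain.1 hp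
  obtain ⟨x, s, rfl⟩ := List.exists_cons_of_ne_nil (isWalk_iff_isChain.1 hq).1
  have hqc := List.isChain_cons.1 (isWalk_iff_isChain.1 hq).2
  refine isWalk_iff_isChain.2 ⟨by simp [hpne], List.isChain_append.2 ⟨hpc, hqc.2, ?_⟩⟩
  simpa [h] using hqc.1

theorem IsWalk.of_append {p r : List V} {v : V} (h : IsWalk E (p ++ r))
    (hp : p.getLast? = some v) : IsWalk E p ∧ IsWalk E (v :: r) := by
  obtain ⟨hpc, hrc, hpr⟩ := List.isChain_append.1 (isWalk_iff_isChain.1 h).2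
  refine ⟨isWalk_iff_isChain.2 ⟨fun hp0 => by simp [hp0] at hp, hpc⟩,
    isWalk_iff_isChain.2 ⟨List.cons_ne_nil _ _, List.isChain_cons.2 ⟨hpr v hp, hrc⟩⟩⟩

theorem IsWalk.mem_of_forall_adj {S : Set V} {u : V}
    (hS : ∀ x ∈ S, x ≠ u → ∀ y, E x y → y ∈ S) :
    ∀ {l : List V} {b : V}, IsWalk E l → l.head? = some b → l.getLast? = some u →
      b ∈ S → u ∈ S
  | [_], _, _, hb, hu, hbS => by simp_all
  | a :: c :: t, b, hl, hb, hu, hbS => by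
    obtain rfl : a = b := by simpa using hb
    by_cases hbu : a = u
    · exact hbu ▸ hbS
    · rw [List.getLast?_cons_cons] at hu
      exact hl.2.mem_of_forall_adj hS rfl hu (hS a hbS hbu c hl.1)

end Walks

section WalkMass

variable [Fintype V] {E : V → V → Prop} [DecidableRel E]

theorem mem_outNbrs {w x : V} : x ∈ outNbrs E w ↔ E w x := by
  simp [outNbrs]

theorem walkWt_cons (a : V) {t : List V} (ht : t ≠ []) :
    walkWt E (a :: t) = ((outNbrs E a).card : ℝ≥0∞)⁻¹ * walkWt E t := by
  obtain ⟨b, s, rfl⟩ := List.exists_cons_of_ne_nil ht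
  rfl

theorem walkWt_append_tail : ∀ {p q : List V}, p.getLast? = q.head? →
    walkWt E (p ++ q.tail) = walkWt E p * walkWt E q
  | [], q, h => by
    obtain rfl := List.head?_eq_none_iff.1 (h.symm.trans List.getLast?_nil)
    simp [walkWt]
  | [a], q, h => by
    obtain ⟨s, rfl⟩ := List.head?_eq_some_iff.1 h.symm
    simp [walkWt]
  | a :: b :: t, q, h => by
    rw [List.getLast?_cons_cons] at h
    have ih := walkWt_append_tail (p := b :: t) h
    rw [List.cons_append] at ih
    simp only [List.cons_append, walkWt, ih, mul_assoc]

variable (E) in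
/-- The total weight of a set of finite walks: for a prefix-free set, the probability that the
random walk starts by following one of them. -/
noncomputable def walkMass (P : List V → Prop) : ℝ≥0∞ :=
  ∑' l : {l : List V // P l}, walkWt E l

theorem walkMass_eq_tsum_indicator (P : List V → Prop) :
    walkMass E P = ∑' l, {l | P l}.indicator (walkWt E) l :=
  tsum_subtype {l | P l} (walkWt E)

theorem walkMass_congr {P Q : List V → Prop} (h : ∀ l, P l ↔ Q l) :
    walkMass E P = walkMass E Q := by
  rw [funext fun l => propext (h l)]

theorem walkMass_mono {P Q : List V → Prop} (h : ∀ l, P l → Q l) :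
    walkMass E P ≤ walkMass E Q := by
  simp only [walkMass_eq_tsum_indicator]
  exact ENNReal.tsum_le_tsum fun l => Set.indicator_le_indicator_of_subset h (fun _ => zero_le) l

theorem walkMass_eq_zero {P : List V → Prop} (h : ∀ l, ¬ P l) : walkMass E P = 0 := by
  have : IsEmpty {l // P l} := ⟨fun l => h l.1 l.2⟩
  exact tsum_empty

theorem walkMass_eq_walkWt (l₀ : List V) : walkMass E (· = l₀) = walkWt E l₀ := by
  simp only [walkMass, tsum_fintype, Finset.univ_unique, Finset.sum_singleton]
  rfl

theorem walkMass_eq_add (P Q : List V → Prop) :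
    walkMass E P = walkMass E (fun l => P l ∧ Q l) + walkMass E (fun l => P l ∧ ¬ Q l) := by
  simp only [walkMass_eq_tsum_indicator, ← ENNReal.tsum_add]
  congr 1; funext l
  by_cases hP : P l <;> by_cases hQ : Q l <;> simp [Set.indicator, hP, hQ]

theorem walkMass_le_of_forall_length_le {P : List V → Prop} {c : ℝ≥0∞}
    (h : ∀ n, walkMass E (fun l => P l ∧ l.length ≤ n) ≤ c) : walkMass E P ≤ c := by
  rw [walkMass_eq_tsum_indicator, ENNReal.tsum_eq_iSup_sum]
  refine iSup_le fun s => le_trans ?_ (h (s.sup List.length))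
  rw [walkMass_eq_tsum_indicator]
  refine le_trans (Finset.sum_le_sum fun l hl => ?_) (ENNReal.sum_le_tsum s)
  by_cases hP : P l <;> simp [Set.indicator, hP, Finset.le_sup hl]

theorem walkMass_eq_sum_head (s : Finset V) {P : List V → Prop}
    (hP : ∀ l, P l → ∃ x ∈ s, l.head? = some x) :
    walkMass E P = ∑ x ∈ s, walkMass E (fun l => l.head? = some x ∧ P l) := by
  simp only [walkMass_eq_tsum_indicator]
  rw [← Summable.tsum_finsetSum fun _ _ => ENNReal.summable]
  congr 1; funext l
  by_cases hl : P l
  · obtain ⟨x, hx, hlx⟩ := hP l hl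
    rw [Finset.sum_eq_single_of_mem x hx fun y _ hyx => by simp [hlx, Ne.symm hyx]]
    simp [hl, hlx]
  · simp [hl]

theorem walkMass_eq_inv_mul_cons (w : V) {P : List V → Prop}
    (hP : ∀ l, P l → l.head? = some w ∧ 1 < l.length) :
    walkMass E P = ((outNbrs E w).card : ℝ≥0∞)⁻¹ * walkMass E (fun t => P (w :: t)) := by
  simp only [walkMass_eq_tsum_indicator]
  rw [← ENNReal.tsum_mul_left, ← (List.cons_injective (a := w)).tsum_eq]
  · congr 1; funext t
    by_cases ht : P (w :: t)
    · have htne : t ≠ [] := by rintro rfl; simpa using (hP _ ht).2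
      simp [ht, walkWt_cons w htne]
    · simp [ht]
  · intro l hl
    obtain ⟨t, rfl⟩ := List.head?_eq_some_iff.1 (hP l (Set.mem_of_indicator_ne_zero hl)).1
    exact ⟨t, rfl⟩

theorem walkMass_eq_inv_mul_sum_outNbrs (w : V) {P : List V → Prop}
    (hP : ∀ l, P l → IsWalk E l ∧ l.head? = some w ∧ 1 < l.length) :
    walkMass E P = ((outNbrs E w).card : ℝ≥0∞)⁻¹ *
      ∑ x ∈ outNbrs E w, walkMass E (fun t => t.head? = some x ∧ P (w :: t)) := by
  rw [walkMass_eq_inv_mul_cons w fun l hl => (hP l hl).2, walkMass_eq_sum_head]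
  intro t ht
  obtain ⟨hwalk, -, hlen⟩ := hP _ ht
  obtain ⟨x, s, rfl⟩ := List.exists_cons_of_ne_nil (by rintro rfl; simp at hlen : t ≠ [])
  exact ⟨x, mem_outNbrs.2 hwalk.1, rfl⟩

theorem walkMass_append_tail {P Q R : List V → Prop}
    (hPQ : ∀ p q, P p → Q q → p.getLast? = q.head?)
    (hinj : ∀ p₁ q₁ p₂ q₂, P p₁ → Q q₁ → P p₂ → Q q₂ →
      p₁ ++ q₁.tail = p₂ ++ q₂.tail → p₁ = p₂ ∧ q₁ = q₂)
    (hR : ∀ l, R l ↔ ∃ p q, P p ∧ Q q ∧ p ++ q.tail = l) :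
    walkMass E R = walkMass E P * walkMass E Q := by
  let f : {p // P p} × {q // Q q} → {l // R l} := fun pq =>
    ⟨pq.1 ++ pq.2.1.tail, (hR _).2 ⟨_, _, pq.1.2, pq.2.2, rfl⟩⟩
  have hf : Function.Bijective f := by
    refine ⟨fun a b hab => ?_, fun ⟨l, hl⟩ => ?_⟩
    · obtain ⟨h₁, h₂⟩ := hinj _ _ _ _ a.1.2 a.2.2 b.1.2 b.2.2 (congrArg Subtype.val hab)
      exact Prod.ext (Subtype.ext h₁) (Subtype.ext h₂)
    · obtain ⟨p, q, hp, hq, rfl⟩ := (hR l).1 hl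
      exact ⟨(⟨p, hp⟩, ⟨q, hq⟩), rfl⟩
  rw [walkMass, walkMass, walkMass, ← ENNReal.tsum_mul_right]
  simp_rw [← ENNReal.tsum_mul_left]
  rw [← ENNReal.tsum_prod, ← (Equiv.ofBijective f hf).tsum_eq]
  exact tsum_congr fun pq => walkWt_append_tail (hPQ _ _ pq.1.2 pq.2.2)

end WalkMass

section Average

variable {ι : Type*} {s : Finset ι} {f : ι → ℝ≥0∞}

theorem inv_card_mul_sum_le {c : ℝ≥0∞} (h : ∀ i ∈ s, f i ≤ c) :
    (s.card : ℝ≥0∞)⁻¹ * ∑ i ∈ s, f i ≤ c := by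
  rcases s.eq_empty_or_nonempty with rfl | hs
  · simp
  calc (s.card : ℝ≥0∞)⁻¹ * ∑ i ∈ s, f i
      ≤ (s.card : ℝ≥0∞)⁻¹ * (s.card * c) := by
        gcongr; simpa using Finset.sum_le_card_nsmul s f c h
    _ = c := by
        rw [← mul_assoc, ENNReal.inv_mul_cancel (by simpa using hs.ne_empty) (by simp), one_mul]

theorem eq_of_forall_le_of_eq_inv_card_mul_sum {m : ℝ≥0∞} (hm : m ≠ ⊤)
    (hle : ∀ i ∈ s, m ≤ f i) (heq : m = (s.card : ℝ≥0∞)⁻¹ * ∑ i ∈ s, f i)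
    {c : ι} (hc : c ∈ s) : f c = m := by
  classical
  have hcard : (s.card : ℝ≥0∞) * m = ∑ i ∈ s, f i := by
    rw [heq, ← mul_assoc,
      ENNReal.mul_inv_cancel (by simpa using Finset.ne_empty_of_mem hc) (by simp), one_mul]
  have hrest : (s.erase c).card * m ≤ ∑ i ∈ s.erase c, f i := by
    simpa using Finset.card_nsmul_le_sum _ f m fun i hi => hle i (Finset.mem_of_mem_erase hi)
  have hrest_top : ((s.erase c).card : ℝ≥0∞) * m ≠ ⊤ := by finiteness
  refine le_antisymm (ENNReal.le_of_add_le_add_right hrest_top ?_) (hle c hc)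
  calc f c + (s.erase c).card * m ≤ ∑ i ∈ s, f i := by
        rw [← Finset.add_sum_erase s f hc]; gcongr
    _ = m + (s.erase c).card * m := by
        rw [← hcard, ← Finset.card_erase_add_one hc]; push_cast; ring

end Average

section Hitting

variable {E : V → V → Prop}

variable (E) in
def IsHittingWalk (w u : V) (q : List V) : Prop :=
  IsWalk E q ∧ q.head? = some w ∧ q.getLast? = some u ∧ u ∉ q.dropLast

theorem IsHittingWalk.one_lt_length {w u : V} {q : List V} (h : IsHittingWalk E w u q)
    (hwu : w ≠ u) : 1 < q.length := by
  obtain ⟨-, hw, hu, -⟩ := h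
  obtain ⟨t, rfl⟩ := List.head?_eq_some_iff.1 hw
  rcases t with _ | ⟨x, t⟩
  · exact absurd (by simpa using hu) hwu
  · simp

theorem isHittingWalk_self_iff {u : V} {q : List V} : IsHittingWalk E u u q ↔ q = [u] := by
  refine ⟨fun ⟨_, hu, _, hdrop⟩ => ?_, fun h => h ▸ ⟨trivial, rfl, rfl, by simp⟩⟩
  obtain ⟨t, rfl⟩ := List.head?_eq_some_iff.1 hu
  rcases t with _ | ⟨x, t⟩
  · rfl
  · simp at hdrop

theorem isHittingWalk_cons_iff {w u x : V} {t : List V} (hwu : w ≠ u) (ht : t.head? = some x) :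
    IsHittingWalk E w u (w :: t) ↔ E w x ∧ IsHittingWalk E x u t := by
  obtain ⟨s, rfl⟩ := List.head?_eq_some_iff.1 ht
  simp only [IsHittingWalk, isWalk_cons ht, List.getLast?_cons_cons, List.dropLast_cons_cons,
    List.mem_cons, hwu.symm, false_or, List.head?_cons]
  tauto

variable [Fintype V] [DecidableRel E]

theorem walkMass_isHittingWalk_self (u : V) : walkMass E (IsHittingWalk E u u) = 1 := by
  rw [walkMass_congr fun _ => isHittingWalk_self_iff, walkMass_eq_walkWt]
  rfl

theorem walkMass_isHittingWalk_of_ne {w u : V} (hwu : w ≠ u) (L : ℕ → Prop) :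
    walkMass E (fun q => IsHittingWalk E w u q ∧ L q.length) =
      ((outNbrs E w).card : ℝ≥0∞)⁻¹ * ∑ x ∈ outNbrs E w,
        walkMass E (fun t => IsHittingWalk E x u t ∧ L (t.length + 1)) := by
  rw [walkMass_eq_inv_mul_sum_outNbrs w fun q hq => ⟨hq.1.1, hq.1.2.1, hq.1.one_lt_length hwu⟩]
  refine congrArg _ (Finset.sum_congr rfl fun x hx => walkMass_congr fun t => ?_)
  rw [List.length_cons]
  constructor
  · rintro ⟨ht, hwt, hL⟩
    exact ⟨((isHittingWalk_cons_iff hwu ht).1 hwt).2, hL⟩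
  · rintro ⟨hxt, hL⟩
    exact ⟨hxt.2.1, (isHittingWalk_cons_iff hwu hxt.2.1).2 ⟨mem_outNbrs.1 hx, hxt⟩, hL⟩

theorem walkMass_isHittingWalk_le_one (w u : V) : walkMass E (IsHittingWalk E w u) ≤ 1 := by
  refine walkMass_le_of_forall_length_le fun n => ?_
  induction n generalizing w with
  | zero =>
    refine (walkMass_eq_zero (E := E) fun q hq => ?_).trans_le zero_le
    exact (isWalk_iff_isChain.1 hq.1.1).1 (List.eq_nil_of_length_eq_zero (Nat.le_zero.1 hq.2))
  | succ n ih =>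
    by_cases hwu : w = u
    · subst hwu
      exact (walkMass_mono fun q hq => hq.1).trans (walkMass_isHittingWalk_self w).le
    · rw [walkMass_isHittingWalk_of_ne hwu (· ≤ n + 1)]
      simp only [Nat.add_le_add_iff_right]
      exact inv_card_mul_sum_le fun x _ => ih x

theorem one_le_walkMass_isHittingWalk (hconn : Conn E) (w u : V) :
    1 ≤ walkMass E (IsHittingWalk E w u) := by
  set h := fun w => walkMass E (IsHittingWalk E w u)
  have : Nonempty V := ⟨w⟩
  obtain ⟨a, ha⟩ := Finite.exists_min h
  have hmin_top : h a ≠ ⊤ := ne_top_of_le_ne_top ENNReal.one_ne_top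
    ((ha u).trans (walkMass_isHittingWalk_self u).le)
  have hclosed : ∀ b ∈ {b | h b = h a}, b ≠ u → ∀ c, E b c → c ∈ {b | h b = h a} := by
    intro b hb hbu c hbc
    have harm := walkMass_isHittingWalk_of_ne (E := E) hbu fun _ => True
    simp only [and_true] at harm
    exact eq_of_forall_le_of_eq_inv_card_mul_sum hmin_top (fun x _ => ha x)
      (hb.symm.trans harm) (mem_outNbrs.2 hbc)
  obtain ⟨l, hl, hla, hlu⟩ := hconn a u
  have hu : h u = h a := IsWalk.mem_of_forall_adj (S := {b | h b = h a}) hclosed hl hla hlu rfl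
  calc 1 = h a := hu ▸ (walkMass_isHittingWalk_self u).symm
    _ ≤ h w := ha w

theorem walkMass_isHittingWalk (hconn : Conn E) (w u : V) :
    walkMass E (IsHittingWalk E w u) = 1 :=
  (walkMass_isHittingWalk_le_one w u).antisymm (one_le_walkMass_isHittingWalk hconn w u)

end Hitting

theorem List.IsPrefix.eq_of_getLast?_eq_of_notMem_dropLast {α : Type*} {p l : List α} {v : α}
    (h : p <+: l) (hp : p.getLast? = some v) (hl : v ∉ l.dropLast) : p = l := by
  obtain ⟨r, rfl⟩ := h
  rcases eq_or_ne r [] with rfl | hr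
  · simp
  · rw [List.dropLast_append_of_ne_nil hr] at hl
    exact absurd (List.mem_append_left _ (List.mem_of_getLast? hp)) hl

section CoverTours

variable {E : V → V → Prop}

variable (E) in
/-- The part of an `L(x; v, u)` tour up to its first visit to `v`. -/
def IsCoverTourAvoiding (x v u : V) (p : List V) : Prop :=
  IsHittingWalk E x v p ∧ (∀ y, y ≠ u → y ∈ p) ∧ u ∉ p

theorem isCoverTour_iff {u v : V} {l : List V} :
    IsCoverTour E u v l ↔ IsHittingWalk E u v l ∧ ∀ y, y ∈ l := by
  simp only [IsCoverTour, IsHittingWalk]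
  tauto

theorem isCoverTour_cons_iff {u v x : V} {t : List V} (hvu : v ≠ u) (hux : E u x)
    (ht : t.head? = some x) :
    IsCoverTour E u v (u :: t) ↔ IsHittingWalk E x v t ∧ ∀ y, y ≠ u → y ∈ t := by
  simp only [isCoverTour_iff, isHittingWalk_cons_iff hvu.symm ht, hux, true_and, List.mem_cons]
  exact and_congr_right fun _ => forall_congr' fun y => by by_cases hy : y = u <;> simp [hy]

theorem isCoverTour2_iff {x v u : V} {l : List V} (hvu : v ≠ u) :
    IsCoverTour2 E x v u l ↔
      ∃ p q, IsCoverTourAvoiding E x v u p ∧ IsHittingWalk E v u q ∧ p ++ q.tail = l := by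
  constructor
  · rintro ⟨hw, hx, hu, -, hdrop, p, ⟨r, rfl⟩, hv, hvdrop, hcov⟩
    have hr : r ≠ [] := by
      rintro rfl
      exact hvu (Option.some.inj ((List.append_nil p ▸ hv).symm.trans hu))
    rw [List.dropLast_append_of_ne_nil hr, List.mem_append, not_or] at hdrop
    obtain ⟨hwp, hwr⟩ := hw.of_append hv
    refine ⟨p, v :: r, ⟨⟨hwp, ?_, hv, hvdrop⟩, hcov, hdrop.1⟩, ⟨hwr, rfl, ?_, ?_⟩,
      rfl⟩
    · rwa [List.head?_append_of_ne_nil _ (List.ne_nil_of_mem (List.mem_of_getLast? hv))] at hx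
    · rwa [← List.singleton_append, List.getLast?_append_of_ne_nil _ hr,
        ← List.getLast?_append_of_ne_nil p hr]
    · simpa [List.dropLast_cons_of_ne_nil hr, hvu.symm] using hdrop.2
  · rintro ⟨p, q, ⟨⟨hwp, hx, hv, hvdrop⟩, hcov, hup⟩, ⟨hwq, hqv, hqu, hqdrop⟩, rfl⟩
    obtain ⟨r, rfl⟩ := List.head?_eq_some_iff.1 hqv
    have hr : r ≠ [] := by
      rintro rfl
      exact hvu (Option.some.inj hqu)
    rw [← List.singleton_append, List.getLast?_append_of_ne_nil _ hr] at hqu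
    rw [List.dropLast_cons_of_ne_nil hr, List.mem_cons, not_or] at hqdrop
    refine ⟨hwp.append_tail hwq (hv.trans hqv.symm), ?_, ?_, fun y => ?_, ?_,
      p, List.prefix_append p r, hv, hvdrop, hcov⟩
    · rwa [List.head?_append_of_ne_nil _ (List.ne_nil_of_mem (List.mem_of_getLast? hv))]
    · rwa [List.tail_cons, List.getLast?_append_of_ne_nil _ hr]
    · by_cases hy : y = u
      · exact List.mem_append_right _ (hy ▸ List.mem_of_getLast? hqu)
      · exact List.mem_append_left _ (hcov y hy)
    · simpa [List.dropLast_append_of_ne_nil hr, hup] using hqdrop.2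

theorem IsCoverTourAvoiding.append_tail_inj {x v u : V} {p₁ q₁ p₂ q₂ : List V}
    (hp₁ : IsCoverTourAvoiding E x v u p₁) (hq₁ : IsHittingWalk E v u q₁)
    (hp₂ : IsCoverTourAvoiding E x v u p₂) (hq₂ : IsHittingWalk E v u q₂)
    (h : p₁ ++ q₁.tail = p₂ ++ q₂.tail) : p₁ = p₂ ∧ q₁ = q₂ := by
  have hp : p₁ = p₂ := by
    rcases List.prefix_or_prefix_of_prefix (List.prefix_append p₁ q₁.tail)
      (h ▸ List.prefix_append p₂ q₂.tail) with h₁₂ | h₂₁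
    · exact h₁₂.eq_of_getLast?_eq_of_notMem_dropLast hp₁.1.2.2.1 hp₂.1.2.2.2
    · exact (h₂₁.eq_of_getLast?_eq_of_notMem_dropLast hp₂.1.2.2.1 hp₁.1.2.2.2).symm
  subst hp
  refine ⟨rfl, ?_⟩
  rw [← List.cons_head?_tail hq₁.2.1, ← List.cons_head?_tail hq₂.2.1,
    List.append_cancel_left h]

variable [Fintype V] [DecidableRel E]

theorem coverProb2_eq_mul {x v u : V} (hvu : v ≠ u) :
    coverProb2 E x v u =
      walkMass E (IsCoverTourAvoiding E x v u) * walkMass E (IsHittingWalk E v u) :=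
  walkMass_append_tail (fun _ _ hp hq => hp.1.2.2.1.trans hq.2.1.symm)
    (fun _ _ _ _ => IsCoverTourAvoiding.append_tail_inj) fun _ => isCoverTour2_iff hvu

theorem walkMass_isCoverTour_cons (hconn : Conn E) {u v x : V} (hvu : v ≠ u) (hux : E u x) :
    walkMass E (fun t => t.head? = some x ∧ IsCoverTour E u v (u :: t)) =
      coverProb E x v + coverProb2 E x v u := by
  rw [walkMass_congr fun t => ⟨fun h => (isCoverTour_cons_iff hvu hux h.1).1 h.2,
      fun h => ⟨h.1.2.1, (isCoverTour_cons_iff hvu hux h.1.2.1).2 h⟩⟩,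
    walkMass_eq_add _ (u ∈ ·), coverProb2_eq_mul hvu, walkMass_isHittingWalk hconn, mul_one]
  congr 1 <;> refine walkMass_congr fun t => ?_
  · rw [isCoverTour_iff, and_assoc]
    refine and_congr_right fun _ =>
      ⟨fun ⟨hcov, hu⟩ y => ?_, fun hcov => ⟨fun y _ => hcov y, hcov u⟩⟩
    by_cases hy : y = u
    exacts [hy ▸ hu, hcov y hy]
  · exact and_assoc

end CoverTours

end

theorem stmt2_general {V : Type*} [Fintype V] (E : V → V → Prop) [DecidableRel E]
    (hconn : Conn E) (u v : V) (hne : v ≠ u) :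
    coverProb E u v =
      ((outNbrs E u).card : ℝ≥0∞)⁻¹ *
        ∑ x ∈ outNbrs E u, (coverProb E x v + coverProb2 E x v u) := by
  rw [coverProb, ← walkMass, walkMass_eq_inv_mul_sum_outNbrs u fun l hl =>
    ⟨hl.1, hl.2.1, (isCoverTour_iff.1 hl).1.one_lt_length hne.symm⟩]
  exact congrArg _ (Finset.sum_congr rfl fun x hx =>
    walkMass_isCoverTour_cons hconn hne (mem_outNbrs.1 hx))

/-- Equation (1): `P(L(u,v)) = (1/d) ∑ᵢ (P(L(xᵢ,v)) + P(L(xᵢ; v, u)))`, summing over the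
out-neighbours `xᵢ` of `u`, where `d` is the out-degree of `u`. -/
theorem stmt2 {V : Type*} [Fintype V] (E : V → V → Prop) [DecidableRel E]
    (hconn : Conn E) (u v : V) (hne : v ≠ u) (huv : ¬ E u v) :
    coverProb E u v =
      ((outNbrs E u).card : ℝ≥0∞)⁻¹ *
        ∑ x ∈ outNbrs E u, (coverProb E x v + coverProb2 E x v u) :=
  stmt2_general E hconn u v hne
end

section
/- Let G be a digraph with at least 3 vertices such that for every vertex u and all distinct vertices v, w different from u, the probability that a random cover tour from u ends at v equals the probability that it ends at w. Then every edge of G is bidirected: if (v,u) is an edge, then (u,v) is an edge. -/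
open scoped ENNReal BigOperators

/-!
Summing over the last vertex, `∑ v, coverProb E u v` is the probability that the walk from `u`
eventually covers the graph, and this is `1`: by connectivity every vertex starts a covering walk
of some fixed length `N`, so the mass of walks still uncovered after `m * N` steps is at most
`δ ^ m` for some `δ < 1`. Under the hypothesis, every `coverProb E u v` with `v ≠ u` is therefore
`1 / (|V| - 1)`.

Conditioning on the first step,
`coverProb E u v = deg(u)⁻¹ * (∑_{u → x} coverProb E x v + P(the tour never returns to u))`.
Every term of the sum is `1 / (|V| - 1)` except the term `x = v`, present exactly when `u → v`,
which vanishes; so tours from `u` to `v` that never return to `u` exist iff `u → v`. Such a tour for `(v, u)` can be rerouted into one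
for `(u, v)`: its interior covers `V \ {u, v}`, and cover tours from `u` to `v` and from the end of
the interior to `u` supply entry and exit paths avoiding `u` and `v`.
-/

namespace CoverTour

open Finset

variable {V : Type*} (E : V → V → Prop)

lemma isWalk_iff_isChain : ∀ l : List V, IsWalk E l ↔ l ≠ [] ∧ l.IsChain E
  | [] => by simp [IsWalk]
  | [a] => by simp [IsWalk]
  | a :: b :: t => by
      rw [IsWalk, isWalk_iff_isChain (b :: t)]
      simp [List.isChain_cons_cons]

lemma isChain_append_tail {p q : List V} (hp : p.IsChain E) (hq : q.IsChain E)
    (h : p.getLast? = q.head?) : (p ++ q.tail).IsChain E := by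
  rcases q with _ | ⟨b, t⟩
  · simpa using hp
  obtain ⟨p, rfl⟩ : ∃ p', p = p' ++ [b] :=
    ⟨p.dropLast, (List.dropLast_append_getLast? b (by simpa using h)).symm⟩
  simpa using hp.append_overlap (l₃ := t) hq (List.cons_ne_nil b [])

lemma mem_append_tail {p q : List V} (h : p.getLast? = q.head?) (x : V) :
    x ∈ p ++ q.tail ↔ x ∈ p ∨ x ∈ q := by
  rcases q with _ | ⟨b, t⟩
  · simp
  have hb : b ∈ p := List.mem_of_getLast? (by simpa using h)
  simp only [List.tail_cons, List.mem_append, List.mem_cons]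
  constructor
  · rintro (hx | hx) <;> simp [hx]
  · rintro (hx | rfl | hx) <;> simp [*]

def coverTours (u : V) : Set (List V) :=
  {l | ∃ v, IsCoverTour E u v l}

def avoidingTours (u v : V) : Set (List V) :=
  {m | IsCoverTour E u v (u :: m) ∧ u ∉ m}

lemma isCoverTour_cons_iff {u v x : V} {m : List V} (hvu : v ≠ u) (hx : m.head? = some x)
    (hu : u ∈ m) : IsCoverTour E u v (u :: m) ↔ E u x ∧ IsCoverTour E x v m := by
  obtain ⟨t, rfl⟩ := List.head?_eq_some_iff.1 hx
  simp only [IsCoverTour, IsWalk, List.head?_cons, List.getLast?_cons_cons, List.mem_cons,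
    List.dropLast_cons_cons, true_and]
  grind

lemma mem_coverTours_iff {u : V} {l : List V} (hl : IsWalk E l) (hu : l.head? = some u) :
    l ∈ coverTours E u ↔ (∀ x, x ∈ l) ∧ ¬∀ x, x ∈ l.dropLast := by
  have hne := ((isWalk_iff_isChain E l).1 hl).1
  constructor
  · rintro ⟨v, -, -, hv, hcov, hvl⟩
    exact ⟨hcov, fun h => hvl (h v)⟩
  · rintro ⟨hcov, hdrop⟩
    obtain ⟨w, hw⟩ := not_forall.1 hdrop
    have hlast : w = l.getLast hne := by
      have := hcov w
      rw [← List.dropLast_append_getLast hne, List.mem_append] at this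
      simpa [hw] using this
    exact ⟨w, hl, hu, by rw [hlast, List.getLast?_eq_some_getLast hne], hcov, hw⟩

lemma exists_isWalk_covering [Fintype V] (hconn : Conn E) (a : V) :
    ∃ l, IsWalk E l ∧ l.head? = some a ∧ ∀ x, x ∈ l := by
  suffices h : ∀ (ts : List V) (a : V), ∃ l, IsWalk E l ∧ l.head? = some a ∧ ∀ t ∈ ts, t ∈ l by
    obtain ⟨l, hw, ha, hl⟩ := h univ.toList a
    exact ⟨l, hw, ha, fun x => hl x (mem_toList.2 (mem_univ x))⟩
  intro ts
  induction ts with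
  | nil => exact fun a => ⟨[a], trivial, rfl, by simp⟩
  | cons t ts ih =>
    intro a
    obtain ⟨l₁, hw₁, ha₁, ht₁⟩ := hconn a t
    obtain ⟨l₂, hw₂, ht₂, hl₂⟩ := ih t
    have hlink : l₁.getLast? = l₂.head? := ht₁.trans ht₂.symm
    have hne := ((isWalk_iff_isChain E l₁).1 hw₁).1
    refine ⟨l₁ ++ l₂.tail, ?_, by rw [List.head?_append_of_ne_nil _ hne, ha₁], ?_⟩
    · rw [isWalk_iff_isChain] at hw₁ hw₂ ⊢
      exact ⟨by simp [hne], isChain_append_tail E hw₁.2 hw₂.2 hlink⟩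
    · intro x hx
      rw [mem_append_tail hlink]
      rcases List.mem_cons.1 hx with rfl | hx
      · exact Or.inr (List.mem_of_mem_head? (ht₂ ▸ rfl))
      · exact Or.inr (hl₂ x hx)

section RandomWalk

variable [Fintype V] [DecidableRel E]

lemma walkWt_cons (a : V) {l : List V} (hl : l ≠ []) :
    walkWt E (a :: l) = (#(outNbrs E a) : ℝ≥0∞)⁻¹ * walkWt E l := by
  cases l with
  | nil => exact absurd rfl hl
  | cons b t => rfl

lemma walkWt_pos : ∀ l : List V, 0 < walkWt E l
  | [] | [_] => by simp [walkWt]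
  | a :: b :: t => by
      rw [walkWt_cons E a (List.cons_ne_nil b t)]
      exact ENNReal.mul_pos (by simp) (walkWt_pos (b :: t)).ne'

lemma walkWt_append : ∀ {p q : List V}, p ≠ [] → q ≠ [] → p.getLast? = q.head? →
    walkWt E (p ++ q.tail) = walkWt E p * walkWt E q
  | [a], b :: t, _, _, h => by
      obtain rfl : a = b := by simpa using h
      simp [walkWt]
  | a :: b :: t, q, _, hq, h => by
      have ih := walkWt_append (List.cons_ne_nil b t) hq (by simpa using h)
      rw [List.cons_append, walkWt_cons E a (by simp), ih,
        walkWt_cons E a (List.cons_ne_nil b t), mul_assoc]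

noncomputable def mass (P : Set (List V)) : ℝ≥0∞ :=
  ∑' l, P.indicator (walkWt E) l

lemma coverProb_eq_mass (u v : V) : coverProb E u v = mass E {l | IsCoverTour E u v l} :=
  tsum_subtype _ _

lemma mass_pos_iff {P : Set (List V)} : 0 < mass E P ↔ P.Nonempty := by
  simp [pos_iff_ne_zero, mass, ENNReal.tsum_eq_zero, (walkWt_pos E _).ne', Set.Nonempty]

lemma mass_union {P Q : Set (List V)} (h : Disjoint P Q) :
    mass E (P ∪ Q) = mass E P + mass E Q := by
  simp only [mass, Set.indicator_union_of_disjoint h, ENNReal.tsum_add]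

lemma mass_biUnion {ι : Type*} (s : Finset ι) (P : ι → Set (List V))
    (h : (s : Set ι).PairwiseDisjoint P) : mass E (⋃ i ∈ s, P i) = ∑ i ∈ s, mass E (P i) := by
  simp only [mass, Finset.indicator_biUnion s P h]
  exact Summable.tsum_finsetSum fun _ _ => ENNReal.summable

lemma mass_image_cons (u : V) {P : Set (List V)} (hP : [] ∉ P) :
    mass E (List.cons u '' P) = (#(outNbrs E u) : ℝ≥0∞)⁻¹ * mass E P := by
  rw [mass, ← List.cons_injective.tsum_eq, mass, ← ENNReal.tsum_mul_left]
  · refine tsum_congr fun m => ?_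
    rw [Set.indicator_image List.cons_injective]
    by_cases hm : m ∈ P
    · simp [hm, walkWt_cons E u (ne_of_mem_of_not_mem hm hP)]
    · simp [hm]
  · exact (Set.support_indicator_subset).trans (Set.image_subset_range _ _)

lemma sum_coverProb_eq_mass (u : V) : ∑ v, coverProb E u v = mass E (coverTours E u) := by
  have hunion : coverTours E u = ⋃ v ∈ univ, {l | IsCoverTour E u v l} := by
    ext; simp [coverTours]
  rw [hunion, mass_biUnion]
  · simp only [coverProb_eq_mass]
  · intro v _ w _ hvw
    refine Set.disjoint_left.2 fun l hv hw => hvw ?_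
    simpa [hv.2.2.1] using hw.2.2.1

lemma coverTours_eq_image_cons {u v : V} (hvu : v ≠ u) :
    {l | IsCoverTour E u v l} =
      List.cons u '' ((⋃ x ∈ outNbrs E u, {m | IsCoverTour E x v m}) ∪ avoidingTours E u v) := by
  ext l
  simp only [Set.mem_ofPred_eq, Set.mem_image, Set.mem_union, Set.mem_iUnion, outNbrs,
    Finset.mem_filter, Finset.mem_univ, true_and, exists_prop]
  constructor
  · intro h
    obtain ⟨m, rfl⟩ := List.head?_eq_some_iff.1 h.2.1
    refine ⟨m, ?_, rfl⟩
    by_cases hu : u ∈ m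
    · obtain ⟨x, hx⟩ := Option.isSome_iff_exists.1 (List.isSome_head?.2 (List.ne_nil_of_mem hu))
      exact Or.inl ⟨x, (isCoverTour_cons_iff E hvu hx hu).1 h⟩
    · exact Or.inr ⟨h, hu⟩
  · rintro ⟨m, ⟨x, hux, hm⟩ | hm, rfl⟩
    · exact (isCoverTour_cons_iff E hvu hm.2.1 (hm.2.2.2.1 u)).2 ⟨hux, hm⟩
    · exact hm.1

lemma coverProb_eq_firstStep {u v : V} (hvu : v ≠ u) :
    coverProb E u v = (#(outNbrs E u) : ℝ≥0∞)⁻¹ *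
      (∑ x ∈ outNbrs E u, coverProb E x v + mass E (avoidingTours E u v)) := by
  rw [coverProb_eq_mass, coverTours_eq_image_cons E hvu, mass_image_cons, mass_union, mass_biUnion]
  · simp only [coverProb_eq_mass]
  · intro x _ y _ hxy
    refine Set.disjoint_left.2 fun l hx hy => hxy ?_
    simpa [hx.2.1] using hy.2.1
  · refine Set.disjoint_left.2 fun m hm hm' => hm'.2 ?_
    obtain ⟨x, -, hx⟩ := Set.mem_iUnion₂.1 hm
    exact hx.2.2.2.1 u
  · rintro (h | h)
    · obtain ⟨x, -, hx⟩ := Set.mem_iUnion₂.1 h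
      exact hx.1
    · exact hvu (by simpa [eq_comm] using h.1.2.2.1)

section Horizon

open scoped Classical

noncomputable def walksFrom : ℕ → V → Finset (List V)
  | 0, u => {[u]}
  | n + 1, u => (outNbrs E u).biUnion fun x => (walksFrom n x).image (List.cons u)

lemma mem_walksFrom : ∀ {n : ℕ} {u : V} {l : List V},
    l ∈ walksFrom E n u ↔ IsWalk E l ∧ l.length = n + 1 ∧ l.head? = some u
  | 0, u, l => by
      rcases l with _ | ⟨a, _ | ⟨b, t⟩⟩ <;> simp [walksFrom, IsWalk, eq_comm]
  | n + 1, u, l => by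
      simp only [walksFrom, mem_biUnion, mem_image, mem_walksFrom, outNbrs, mem_filter,
        mem_univ, true_and]
      constructor
      · rintro ⟨x, hux, m, ⟨hm, hlen, hx⟩, rfl⟩
        obtain ⟨t, rfl⟩ := List.head?_eq_some_iff.1 hx
        exact ⟨⟨hux, hm⟩, by simpa using hlen, rfl⟩
      · rintro ⟨hw, hlen, hu⟩
        obtain ⟨m, rfl⟩ := List.head?_eq_some_iff.1 hu
        rcases m with _ | ⟨x, t⟩
        · simp at hlen
        · exact ⟨x, hw.1, x :: t, ⟨hw.2, by simpa using hlen, rfl⟩, rfl⟩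

lemma ne_nil_of_mem_walksFrom {n : ℕ} {u : V} {l : List V} (hl : l ∈ walksFrom E n u) :
    l ≠ [] :=
  ((isWalk_iff_isChain E l).1 ((mem_walksFrom E).1 hl).1).1

lemma sum_walksFrom_succ (n : ℕ) (u : V) (f : List V → ℝ≥0∞) :
    ∑ l ∈ walksFrom E (n + 1) u, f l = ∑ x ∈ outNbrs E u, ∑ m ∈ walksFrom E n x, f (u :: m) := by
  rw [walksFrom, sum_biUnion]
  · exact sum_congr rfl fun x _ => sum_image fun _ _ _ _ h => List.cons_injective h
  · intro x _ y _ hxy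
    simp only [Function.onFun, disjoint_left, mem_image]
    rintro _ ⟨m, hm, rfl⟩ ⟨m', hm', h⟩
    obtain rfl := List.cons_injective h
    exact hxy (Option.some_injective _
      ((((mem_walksFrom E).1 hm).2.2).symm.trans ((mem_walksFrom E).1 hm').2.2))

lemma sum_walkWt_walksFrom (hout : ∀ u : V, (outNbrs E u).Nonempty) :
    ∀ (n : ℕ) (u : V), ∑ l ∈ walksFrom E n u, walkWt E l = 1
  | 0, u => by simp [walksFrom, walkWt]
  | n + 1, u => by
      rw [sum_walksFrom_succ]
      calc ∑ x ∈ outNbrs E u, ∑ m ∈ walksFrom E n x, walkWt E (u :: m)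
          = ∑ x ∈ outNbrs E u, (#(outNbrs E u) : ℝ≥0∞)⁻¹ := by
            refine sum_congr rfl fun x _ => ?_
            rw [sum_congr rfl fun m hm => walkWt_cons E u (ne_nil_of_mem_walksFrom E hm),
              ← mul_sum, sum_walkWt_walksFrom hout n x, mul_one]
        _ = 1 := by
            rw [sum_const, nsmul_eq_mul]
            exact ENNReal.mul_inv_cancel (by simpa using (hout u).ne_empty) (by simp)

lemma sum_walksFrom_add (a b : ℕ) (u : V) (f : List V → ℝ≥0∞) :
    ∑ l ∈ walksFrom E (a + b) u, f l =
      ∑ p ∈ walksFrom E a u, ∑ q ∈ walksFrom E b (p.getLastD u), f (p ++ q.tail) := by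
  induction a generalizing u f with
  | zero =>
    simp only [walksFrom, zero_add, sum_singleton, List.singleton_append]
    refine sum_congr rfl fun q hq => ?_
    obtain ⟨t, rfl⟩ := List.head?_eq_some_iff.1 ((mem_walksFrom E).1 hq).2.2
    rfl
  | succ a ih =>
    rw [Nat.add_right_comm, sum_walksFrom_succ, sum_walksFrom_succ]
    refine sum_congr rfl fun x _ => ?_
    rw [ih]
    refine sum_congr rfl fun p hp => ?_
    have hp' := ne_nil_of_mem_walksFrom E hp
    simp [List.getLastD_eq_getLast?, List.getLast?_eq_some_getLast hp', List.getLast?_cons]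

lemma getLast?_eq_head?_of_mem_walksFrom {n : ℕ} {p q : List V} {d : V} (hp : p ≠ [])
    (hq : q ∈ walksFrom E n (p.getLastD d)) : p.getLast? = q.head? := by
  rw [((mem_walksFrom E).1 hq).2.2, List.getLastD_eq_getLast?, List.getLast?_eq_some_getLast hp]
  rfl

lemma sum_walkWt_append_walksFrom (hout : ∀ u : V, (outNbrs E u).Nonempty) (n : ℕ) {p : List V}
    (hp : p ≠ []) (d : V) :
    ∑ q ∈ walksFrom E n (p.getLastD d), walkWt E (p ++ q.tail) = walkWt E p := by
  rw [sum_congr rfl fun q hq => walkWt_append E hp (ne_nil_of_mem_walksFrom E hq)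
    (getLast?_eq_head?_of_mem_walksFrom E hp hq), ← mul_sum, sum_walkWt_walksFrom E hout, mul_one]

noncomputable def coveredMass (n : ℕ) (u : V) : ℝ≥0∞ :=
  ∑ l ∈ walksFrom E n u with ∀ x, x ∈ l, walkWt E l

noncomputable def uncoveredMass (n : ℕ) (u : V) : ℝ≥0∞ :=
  ∑ l ∈ walksFrom E n u with ¬∀ x, x ∈ l, walkWt E l

lemma coveredMass_add_uncoveredMass (hout : ∀ u : V, (outNbrs E u).Nonempty) (n : ℕ) (u : V) :
    coveredMass E n u + uncoveredMass E n u = 1 :=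
  (sum_filter_add_sum_filter_not _ _ _).trans (sum_walkWt_walksFrom E hout n u)

lemma uncoveredMass_le_one (hout : ∀ u : V, (outNbrs E u).Nonempty) (n : ℕ) (u : V) :
    uncoveredMass E n u ≤ 1 :=
  le_of_add_le_right (coveredMass_add_uncoveredMass E hout n u).le

lemma uncoveredMass_add_le {k : ℕ} {δ : ℝ≥0∞}
    (hδ : ∀ a, uncoveredMass E k a ≤ δ) (m : ℕ) (u : V) :
    uncoveredMass E (m + k) u ≤ uncoveredMass E m u * δ := by
  rw [uncoveredMass, uncoveredMass, sum_filter, sum_walksFrom_add, sum_filter, sum_mul]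
  refine sum_le_sum fun p hp => ?_
  have hp' := ne_nil_of_mem_walksFrom E hp
  by_cases hcov : ∀ x, x ∈ p
  · rw [if_neg (not_not.2 hcov), zero_mul]
    refine (sum_eq_zero fun q _ => if_neg ?_).le
    exact not_not.2 fun x => List.mem_append_left _ (hcov x)
  rw [if_pos hcov]
  calc _ ≤ ∑ q ∈ walksFrom E k (p.getLastD u),
          walkWt E p * if ¬∀ x, x ∈ q then walkWt E q else 0 := by
        refine sum_le_sum fun q hq => ?_
        have hlink := getLast?_eq_head?_of_mem_walksFrom E hp' hq
        by_cases hpq : ∀ x, x ∈ p ++ q.tail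
        · simp [hpq]
        have hq' : ¬∀ x, x ∈ q := fun h => hpq fun x => (mem_append_tail hlink x).2 (Or.inr (h x))
        rw [if_pos hpq, if_pos hq', walkWt_append E hp' (ne_nil_of_mem_walksFrom E hq) hlink]
    _ ≤ walkWt E p * δ := by
        rw [← mul_sum, ← sum_filter]
        exact mul_le_mul_right (hδ _) _

lemma uncoveredMass_mul_le (hout : ∀ u : V, (outNbrs E u).Nonempty) {k : ℕ} {δ : ℝ≥0∞}
    (hδ : ∀ a, uncoveredMass E k a ≤ δ) : ∀ (m : ℕ) (u : V), uncoveredMass E (m * k) u ≤ δ ^ m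
  | 0, u => by
      simpa using uncoveredMass_le_one E hout 0 u
  | m + 1, u => by
      rw [Nat.succ_mul, pow_succ]
      calc uncoveredMass E (m * k + k) u ≤ uncoveredMass E (m * k) u * δ :=
            uncoveredMass_add_le E hδ (m * k) u
        _ ≤ δ ^ m * δ := by gcongr; exact uncoveredMass_mul_le hout hδ m u

lemma uncoveredMass_antitone (hout : ∀ u : V, (outNbrs E u).Nonempty) (u : V) :
    Antitone fun n => uncoveredMass E n u :=
  antitone_nat_of_succ_le fun n => by
    simpa using uncoveredMass_add_le E (uncoveredMass_le_one E hout 1) n u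

lemma uncoveredMass_lt_one (hout : ∀ u : V, (outNbrs E u).Nonempty) {a : V} {l : List V}
    (hl : IsWalk E l) (ha : l.head? = some a) (hcov : ∀ x, x ∈ l) :
    uncoveredMass E (l.length - 1) a < 1 := by
  have hmem : l ∈ walksFrom E (l.length - 1) a := by
    have := List.length_pos_iff.2 ((isWalk_iff_isChain E l).1 hl).1
    exact (mem_walksFrom E).2 ⟨hl, by omega, ha⟩
  have hcovered : coveredMass E (l.length - 1) a ≠ 0 :=
    ((walkWt_pos E l).trans_le
      (single_le_sum (fun _ _ => zero_le) (mem_filter.2 ⟨hmem, hcov⟩))).ne'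
  have hsum := coveredMass_add_uncoveredMass E hout (l.length - 1) a
  rw [← hsum, add_comm]
  exact ENNReal.lt_add_right
    (ne_top_of_le_ne_top ENNReal.one_ne_top (uncoveredMass_le_one E hout _ a)) hcovered

lemma exists_uncoveredMass_le (hconn : Conn E) (hout : ∀ u : V, (outNbrs E u).Nonempty) :
    ∃ N : ℕ, ∃ δ < 1, ∀ a, uncoveredMass E N a ≤ δ := by
  choose w hw ha hcov using exists_isWalk_covering E hconn
  set N := univ.sup fun a => (w a).length - 1
  have hlt : ∀ a, uncoveredMass E N a < 1 := fun a =>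
    (uncoveredMass_antitone E hout a (le_sup (f := fun a => (w a).length - 1) (mem_univ a)))
      |>.trans_lt (uncoveredMass_lt_one E hout (hw a) (ha a) (hcov a))
  exact ⟨N, univ.sup (uncoveredMass E N), (Finset.sup_lt_iff zero_lt_one).2 fun a _ => hlt a,
    fun a => Finset.le_sup (mem_univ a)⟩

lemma coveredMass_succ (hout : ∀ u : V, (outNbrs E u).Nonempty) (n : ℕ) (u : V) :
    coveredMass E (n + 1) u =
      coveredMass E n u + ∑ l ∈ walksFrom E (n + 1) u with l ∈ coverTours E u, walkWt E l := by
  have hsplit : ∀ l ∈ walksFrom E (n + 1) u,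
      (if ∀ x, x ∈ l then walkWt E l else 0) =
        (if ∀ x, x ∈ l.dropLast then walkWt E l else 0) +
          if l ∈ coverTours E u then walkWt E l else 0 := by
    intro l hl
    obtain ⟨hw, -, hu⟩ := (mem_walksFrom E).1 hl
    rw [mem_coverTours_iff E hw hu]
    by_cases hdrop : ∀ x, x ∈ l.dropLast
    · have hcov : ∀ x, x ∈ l := fun x => List.dropLast_subset l (hdrop x)
      simp [hdrop, hcov]
    · by_cases hcov : ∀ x, x ∈ l <;> simp [hdrop, hcov]
  rw [coveredMass, sum_filter, sum_congr rfl hsplit, sum_add_distrib, sum_filter]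
  congr 1
  rw [sum_walksFrom_add E n 1, coveredMass, sum_filter]
  refine sum_congr rfl fun p hp => ?_
  have hdrop : ∀ q ∈ walksFrom E 1 (p.getLastD u), (p ++ q.tail).dropLast = p := by
    intro q hq
    match q, ((mem_walksFrom E).1 hq).2.1 with
    | [_, _], _ => simp
  rw [sum_congr rfl fun q hq => by rw [hdrop q hq]]
  split_ifs
  · exact sum_walkWt_append_walksFrom E hout 1 (ne_nil_of_mem_walksFrom E hp) u
  · simp

lemma coveredMass_eq_sum_range (hout : ∀ u : V, (outNbrs E u).Nonempty) (u : V) :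
    ∀ n, coveredMass E n u =
      ∑ k ∈ range (n + 1), ∑ l ∈ walksFrom E k u with l ∈ coverTours E u, walkWt E l
  | 0 => by
      have h : [u] ∈ coverTours E u ↔ ∀ x, x ∈ [u] := by
        rw [mem_coverTours_iff E (l := [u]) trivial rfl]
        exact and_iff_left fun h => List.not_mem_nil (h u)
      simp only [coveredMass, walksFrom, sum_filter, sum_singleton, h, zero_add, range_one]
  | n + 1 => by
      rw [coveredMass_succ E hout, coveredMass_eq_sum_range hout u n, sum_range_succ _ (n + 1)]

noncomputable def coverToursUpTo (n : ℕ) (u : V) : Finset (List V) :=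
  (range (n + 1)).biUnion fun k => {l ∈ walksFrom E k u | l ∈ coverTours E u}

lemma mem_coverToursUpTo {n : ℕ} {u : V} {l : List V} :
    l ∈ coverToursUpTo E n u ↔ l ∈ coverTours E u ∧ l.length ≤ n + 1 := by
  simp only [coverToursUpTo, mem_biUnion, mem_range, mem_filter, mem_walksFrom]
  constructor
  · rintro ⟨k, hk, ⟨-, hlen, -⟩, hl⟩
    exact ⟨hl, by omega⟩
  · rintro ⟨hl, hlen⟩
    obtain ⟨v, hct⟩ := hl
    have := List.length_pos_iff.2 ((isWalk_iff_isChain E l).1 hct.1).1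
    exact ⟨l.length - 1, by omega, ⟨hct.1, by omega, hct.2.1⟩, v, hct⟩

lemma coveredMass_eq_sum_coverToursUpTo (hout : ∀ u : V, (outNbrs E u).Nonempty) (n : ℕ)
    (u : V) : coveredMass E n u = ∑ l ∈ coverToursUpTo E n u, walkWt E l := by
  rw [coveredMass_eq_sum_range E hout, coverToursUpTo, sum_biUnion]
  intro j _ k _ hjk
  simp only [Function.onFun, disjoint_left, mem_filter]
  intro l hj hk
  have := ((mem_walksFrom E).1 hj.1).2.1
  have := ((mem_walksFrom E).1 hk.1).2.1
  exact hjk (by omega)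

lemma mass_coverTours_eq_iSup (hout : ∀ u : V, (outNbrs E u).Nonempty) (u : V) :
    mass E (coverTours E u) = ⨆ n, coveredMass E n u := by
  refine le_antisymm ?_ (iSup_le fun n => ?_)
  · rw [mass, ENNReal.tsum_eq_iSup_sum]
    refine iSup_le fun t => ?_
    calc ∑ l ∈ t, (coverTours E u).indicator (walkWt E) l
        = ∑ l ∈ t with l ∈ coverTours E u, walkWt E l := by
          rw [sum_filter]
          rfl
      _ ≤ ∑ l ∈ coverToursUpTo E (t.sup List.length) u, walkWt E l := by
          refine sum_le_sum_of_subset fun l hl => ?_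
          rw [mem_filter] at hl
          exact (mem_coverToursUpTo E).2 ⟨hl.2, (le_sup hl.1).trans (Nat.le_succ _)⟩
      _ ≤ ⨆ n, coveredMass E n u := by
          rw [← coveredMass_eq_sum_coverToursUpTo E hout]
          exact le_iSup (fun n => coveredMass E n u) _
  · rw [coveredMass_eq_sum_coverToursUpTo E hout, mass]
    calc ∑ l ∈ coverToursUpTo E n u, walkWt E l
        = ∑ l ∈ coverToursUpTo E n u, (coverTours E u).indicator (walkWt E) l :=
          sum_congr rfl fun l hl =>
            (Set.indicator_of_mem ((mem_coverToursUpTo E).1 hl).1 _).symm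
      _ ≤ _ := ENNReal.sum_le_tsum _

lemma mass_coverTours_eq_one (hconn : Conn E) (hout : ∀ u : V, (outNbrs E u).Nonempty) (u : V) :
    mass E (coverTours E u) = 1 := by
  rw [mass_coverTours_eq_iSup E hout]
  refine le_antisymm
    (iSup_le fun n => le_of_add_le_left (coveredMass_add_uncoveredMass E hout n u).le) ?_
  obtain ⟨N, δ, hδ, hbound⟩ := exists_uncoveredMass_le E hconn hout
  have hlim : Filter.Tendsto (fun m => (⨆ n, coveredMass E n u) + δ ^ m) Filter.atTop
      (nhds ((⨆ n, coveredMass E n u) + 0)) :=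
    tendsto_const_nhds.add (ENNReal.tendsto_pow_atTop_nhds_zero_of_lt_one hδ)
  refine ge_of_tendsto' (by simpa using hlim) fun m => ?_
  calc 1 = coveredMass E (m * N) u + uncoveredMass E (m * N) u :=
        (coveredMass_add_uncoveredMass E hout _ u).symm
    _ ≤ _ := add_le_add (le_iSup (fun n => coveredMass E n u) _)
        (uncoveredMass_mul_le E hout hbound m u)

end Horizon

lemma coverProb_self [Nontrivial V] (u : V) : coverProb E u u = 0 := by
  rw [coverProb_eq_mass]
  by_contra h
  obtain ⟨l, -, hu, -, hcov, hlast⟩ := (mass_pos_iff E).1 (pos_iff_ne_zero.2 h)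
  obtain ⟨t, rfl⟩ := List.head?_eq_some_iff.1 hu
  rcases t with _ | ⟨a, t⟩
  · obtain ⟨w, hw⟩ := exists_ne u
    exact hw (List.mem_singleton.1 (hcov w))
  · exact hlast (by simp)

lemma sum_coverProb_eq_one (hconn : Conn E) (hout : ∀ u : V, (outNbrs E u).Nonempty) (u : V) :
    ∑ v, coverProb E u v = 1 := by
  rw [sum_coverProb_eq_mass, mass_coverTours_eq_one E hconn hout]

def LastVertexUniform : Prop :=
  ∀ u v w : V, v ≠ u → w ≠ u → v ≠ w → coverProb E u v = coverProb E u w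

lemma coverProb_eq_inv_card_sub_one (hconn : Conn E) (hout : ∀ u : V, (outNbrs E u).Nonempty)
    (huni : LastVertexUniform E) [Nontrivial V] {u v : V} (hvu : v ≠ u) :
    coverProb E u v = ((Fintype.card V - 1 : ℕ) : ℝ≥0∞)⁻¹ := by
  refine ENNReal.eq_inv_of_mul_eq_one_left ?_
  classical
  have hsum : ∀ w ∈ univ.erase u, coverProb E u w = coverProb E u v := fun w hw => by
    by_cases hwv : w = v
    · rw [hwv]
    · exact huni u w v (Finset.ne_of_mem_erase hw) hvu hwv
  rw [← sum_coverProb_eq_one E hconn hout u, ← add_sum_erase _ _ (mem_univ u), coverProb_self,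
    zero_add, sum_congr rfl hsum, sum_const, card_erase_of_mem (mem_univ u), card_univ,
    nsmul_eq_mul, mul_comm]

lemma exists_isCoverTour (hconn : Conn E) (hout : ∀ u : V, (outNbrs E u).Nonempty)
    (huni : LastVertexUniform E) [Nontrivial V] {u v : V} (hvu : v ≠ u) :
    ∃ l, IsCoverTour E u v l := by
  have hpos : 0 < coverProb E u v := by
    rw [coverProb_eq_inv_card_sub_one E hconn hout huni hvu]
    simp
  exact (mass_pos_iff E).1 (coverProb_eq_mass E u v ▸ hpos)

lemma avoidingTours_nonempty_iff (hconn : Conn E) (hout : ∀ u : V, (outNbrs E u).Nonempty)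
    (huni : LastVertexUniform E) [Nontrivial V] {u v : V} (hvu : v ≠ u) :
    (avoidingTours E u v).Nonempty ↔ E u v := by
  classical
  set c := ((Fintype.card V - 1 : ℕ) : ℝ≥0∞)⁻¹
  have hc : ∀ {a b : V}, b ≠ a → coverProb E a b = c :=
    coverProb_eq_inv_card_sub_one E hconn hout huni
  have hc_ne_top : c ≠ ⊤ := by
    have := Fintype.one_lt_card (α := V)
    simp only [c, ne_eq, ENNReal.inv_eq_top, Nat.cast_eq_zero]
    omega
  set d := (#(outNbrs E u) : ℝ≥0∞)
  set S := ∑ x ∈ outNbrs E u, coverProb E x v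
  have hS : S + (if E u v then c else 0) = d * c := by
    have hterm : ∀ x, coverProb E x v + (if x = v then c else 0) = c := fun x => by
      by_cases hx : x = v
      · simp [hx, coverProb_self]
      · simp [hx, hc (Ne.symm hx)]
    have hmiss : (if E u v then c else 0) = ∑ x ∈ outNbrs E u, if x = v then c else 0 := by
      rw [sum_ite_eq']
      simp [outNbrs]
    rw [hmiss, ← sum_add_distrib,
      sum_congr rfl fun x _ => hterm x, sum_const, nsmul_eq_mul]
  have hS_ne_top : S ≠ ⊤ :=
    ne_top_of_le_ne_top (ENNReal.mul_ne_top (by simp [d]) hc_ne_top) (le_self_add.trans hS.le)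
  have hT : mass E (avoidingTours E u v) = if E u v then c else 0 := by
    have h := coverProb_eq_firstStep E hvu
    rw [hc hvu] at h
    refine (ENNReal.add_right_inj hS_ne_top).1 ?_
    rw [hS, h, ← mul_assoc,
      ENNReal.mul_inv_cancel (by simpa [d] using (hout u).ne_empty) (by simp [d]), one_mul]
  rw [← mass_pos_iff E, hT]
  split_ifs with h <;> simp [h, c]

end RandomWalk

def IsCoveringInterior (u v : V) (B : List V) : Prop :=
  (u :: (B ++ [v])).IsChain E ∧ u ∉ B ∧ v ∉ B ∧ ∀ w, w ≠ u → w ≠ v → w ∈ B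

lemma avoidingTours_nonempty_iff_exists_interior {u v : V} (hvu : v ≠ u) :
    (avoidingTours E u v).Nonempty ↔ ∃ B, IsCoveringInterior E u v B := by
  have hlast : ∀ (B : List V) b, (u :: (B ++ [b])).getLast? = some b := fun B b => by
    rw [← List.cons_append, List.getLast?_concat]
  have hdrop : ∀ (B : List V) b, (u :: (B ++ [b])).dropLast = u :: B := fun B b => by
    rw [← List.cons_append, List.dropLast_concat]
  constructor
  · rintro ⟨m, ⟨hw, -, hv, hcov, hvm⟩, hum⟩
    obtain ⟨B, rfl⟩ : ∃ B, m = B ++ [v] := by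
      rcases List.eq_nil_or_concat m with rfl | ⟨B, b, rfl⟩
      · exact absurd (by simpa using hv) (Ne.symm hvu)
      · rw [List.concat_eq_append, hlast, Option.some_inj] at hv
        exact ⟨B, by rw [hv, List.concat_eq_append]⟩
    rw [hdrop] at hvm
    refine ⟨B, ((isWalk_iff_isChain E _).1 hw).2, fun h => hum (by simp [h]),
      fun h => hvm (List.mem_cons_of_mem u h), fun w hwu hwv => ?_⟩
    simpa [hwu, hwv] using hcov w
  · rintro ⟨B, hchain, huB, hvB, hcov⟩
    refine ⟨B ++ [v], ⟨(isWalk_iff_isChain E _).2 ⟨by simp, hchain⟩, rfl, hlast B v, fun w => ?_,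
      ?_⟩, by simp [huB, Ne.symm hvu]⟩
    · by_cases hwu : w = u
      · simp [hwu]
      by_cases hwv : w = v
      · simp [hwv]
      · simp [hcov w hwu hwv]
    · rw [hdrop]
      simp [hvu, hvB]

lemma eq_append_cons_of_mem_right {a : V} {l : List V} (h : a ∈ l) :
    ∃ s t, l = s ++ a :: t ∧ a ∉ t := by
  obtain ⟨s, t, hl, ha⟩ := List.eq_append_cons_of_mem (List.mem_reverse.2 h)
  exact ⟨t.reverse, s.reverse, by simpa using congrArg List.reverse hl, by simpa using ha⟩

lemma mem_dropLast_of_isCoverTour {a b x : V} {l : List V} (hl : IsCoverTour E a b l)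
    (hxb : x ≠ b) : x ∈ l.dropLast := by
  have hsplit := List.dropLast_append_getLast? b hl.2.2.1
  have hx := hl.2.2.2.1 x
  rw [← hsplit, List.mem_append, List.mem_singleton] at hx
  exact hx.resolve_right hxb

lemma head?_eq_of_dropLast_eq {l p r : List V} {x : V} (h : l.dropLast = p ++ x :: r) :
    (p ++ x :: r).head? = l.head? := by
  have hlen := congrArg List.length h
  simp only [List.length_dropLast, List.length_append, List.length_cons] at hlen
  rw [← h, List.head?_dropLast, if_pos (by omega)]

lemma exists_isChain_from_of_isCoverTour {u v x : V} {l : List V} (hl : IsCoverTour E u v l)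
    (hxu : x ≠ u) (hxv : x ≠ v) : ∃ s, (u :: (s ++ [x])).IsChain E ∧ u ∉ s ∧ v ∉ s := by
  obtain ⟨p, r, hpr, -⟩ := List.eq_append_cons_of_mem (mem_dropLast_of_isCoverTour E hl hxv)
  have hup : u ∈ p := by
    have hhead := (head?_eq_of_dropLast_eq hpr).trans hl.2.1
    rcases p with _ | ⟨a, p⟩
    · exact absurd (by simpa using hhead) hxu
    · simp_all
  obtain ⟨p₁, s, rfl, hus⟩ := eq_append_cons_of_mem_right hup
  refine ⟨s, ?_, hus, fun hvs => hl.2.2.2.2 (by simp [hpr, hvs])⟩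
  have hchain := ((isWalk_iff_isChain E l).1 hl.1).2.dropLast
  rw [hpr] at hchain
  exact hchain.infix ⟨p₁, r, by simp⟩

lemma exists_isChain_to_of_isCoverTour {c u v : V} {l : List V} (hl : IsCoverTour E c u l)
    (hcv : c ≠ v) (hvu : v ≠ u) : ∃ t, (c :: (t ++ [v])).IsChain E ∧ u ∉ t ∧ v ∉ t := by
  obtain ⟨p, r, hpr, hvp⟩ := List.eq_append_cons_of_mem (mem_dropLast_of_isCoverTour E hl hvu)
  have hhead := (head?_eq_of_dropLast_eq hpr).trans hl.2.1
  rcases p with _ | ⟨a, t⟩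
  · exact absurd (by simpa using hhead) (Ne.symm hcv)
  obtain rfl : a = c := by simpa using hhead
  refine ⟨t, ?_, fun hut => hl.2.2.2.2 (by simp [hpr, hut]), fun hvt => hvp (by simp [hvt])⟩
  have hchain := ((isWalk_iff_isChain E l).1 hl.1).2.dropLast
  rw [hpr] at hchain
  exact hchain.prefix ⟨r, by simp⟩

lemma exists_isCoveringInterior_swap {u v w : V} (hvu : v ≠ u) (hwu : w ≠ u) (hwv : w ≠ v)
    (htour : ∀ a b : V, b ≠ a → ∃ l, IsCoverTour E a b l) {B : List V}
    (hB : IsCoveringInterior E v u B) : ∃ B', IsCoveringInterior E u v B' := by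
  obtain ⟨hchain, hvB, huB, hcov⟩ := hB
  have hne : B ≠ [] := List.ne_nil_of_mem (hcov w hwv hwu)
  obtain ⟨x, B₁, hx⟩ := List.exists_cons_of_ne_nil hne
  obtain ⟨B₀, c, hc⟩ := List.eq_nil_or_concat B |>.resolve_left hne
  rw [List.concat_eq_append] at hc
  have hxB : x ∈ B := by simp [hx]
  have hcB : c ∈ B := by simp [hc]
  obtain ⟨l₁, hl₁⟩ := htour u v hvu
  obtain ⟨s, hs, hus, hvs⟩ := exists_isChain_from_of_isCoverTour E hl₁
    (ne_of_mem_of_not_mem hxB huB) (ne_of_mem_of_not_mem hxB hvB)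
  obtain ⟨l₂, hl₂⟩ := htour c u (ne_of_mem_of_not_mem hcB huB).symm
  obtain ⟨t, ht, hut, hvt⟩ := exists_isChain_to_of_isCoverTour E hl₂
    (ne_of_mem_of_not_mem hcB hvB) hvu
  have hB₁ : ([x] ++ B₁).IsChain E := hchain.infix ⟨[v], [u], by simp [hx]⟩
  have h₁ := hs.append_overlap (l₁ := u :: s) (l₂ := [x]) hB₁ (List.cons_ne_nil x [])
  have h₂ : ((u :: s ++ B₀) ++ [c]).IsChain E := by
    have heq : (u :: s ++ B₀) ++ [c] = (u :: s) ++ [x] ++ B₁ := by simp [← hc, hx]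
    rwa [heq]
  have h₃ := h₂.append_overlap (l₃ := t ++ [v]) ht (List.cons_ne_nil c [])
  refine ⟨s ++ B ++ t, by simpa [hc] using h₃, by simp [hus, huB, hut], by simp [hvs, hvB, hvt],
    fun w hwu hwv => by simp [hcov w hwv hwu]⟩

section Uniform

variable [Fintype V] [DecidableRel E]

lemma exists_isCoveringInterior_iff (hconn : Conn E) (hout : ∀ u : V, (outNbrs E u).Nonempty)
    (huni : LastVertexUniform E) [Nontrivial V] {u v : V} (hvu : v ≠ u) :
    (∃ B, IsCoveringInterior E u v B) ↔ E u v :=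
  (avoidingTours_nonempty_iff_exists_interior E hvu).symm.trans
    (avoidingTours_nonempty_iff E hconn hout huni hvu)

end Uniform

end CoverTour

/-- Theorem 2: in a connected digraph (with at least 3 vertices, every vertex having an
out-neighbour) in which a random cover tour from any vertex is equally likely to end at any
other vertex, every edge is bidirected. -/
theorem stmt4 {V : Type*} [Fintype V] (E : V → V → Prop) [DecidableRel E]
    (h3 : 3 ≤ Fintype.card V) (hconn : Conn E)
    (hout : ∀ u : V, (outNbrs E u).Nonempty)
    (heq : ∀ u v w : V, v ≠ u → w ≠ u → v ≠ w → coverProb E u v = coverProb E u w) :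
    ∀ u v : V, E v u → E u v := by
  classical
  intro u v hvu_edge
  obtain rfl | hvu := eq_or_ne v u
  · exact hvu_edge
  have : Nontrivial V := Fintype.one_lt_card_iff_nontrivial.1 (by omega)
  obtain ⟨w, hw, hwv⟩ : ∃ w ∈ Finset.univ.erase u, w ≠ v := Finset.exists_mem_ne
    (by rw [Finset.card_erase_of_mem (Finset.mem_univ u), Finset.card_univ]; omega) v
  obtain ⟨B, hB⟩ := (CoverTour.exists_isCoveringInterior_iff E hconn hout heq hvu.symm).2 hvu_edge
  refine (CoverTour.exists_isCoveringInterior_iff E hconn hout heq hvu).1 ?_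
  exact CoverTour.exists_isCoveringInterior_swap E hvu (Finset.ne_of_mem_erase hw) hwv
    (fun a b hba => CoverTour.exists_isCoverTour E hconn hout heq hba) hB
end
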